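/- Let A, B, Ā, B̄, γ̄, f̄ : ℝ → ℝ be differentiable, with A(f̄(φ)) = exp(-2γ̄(φ))·Ā(φ) and B(f̄(φ)) = exp(-2γ̄(φ))·(f̄'(φ))⁻²·(B̄(φ) - 6 γ̄'(φ)² Ā(φ) + 6 γ̄'(φ) Ā'(φ)) for all φ, where f̄'(φ) ≠ 0. Then the integrand of I₃ is invariant up to the Jacobian of the field redefinition: for all φ, (2·A(f̄(φ))·B(f̄(φ)) + 3·(A'(f̄(φ)))²)/(4·A(f̄(φ))²) · (f̄'(φ))² = (2·Ā(φ)·B̄(φ) + 3·(Ā'(φ))²)/(4·Ā(φ)²), provided Ā(φ) ≠ 0. -/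

import Mathlib

/-!
Differentiating `A ∘ f̄ = e^{-2γ̄} Ā` by the chain rule gives `A'(f̄) f̄' = e^{-2γ̄} (Ā' - 2γ̄'Ā)`.
Substituting this and the transformation law of `B` into `2AB + 3(A')²`, the terms in `γ̄'` and
`γ̄'²` cancel, leaving `e^{-4γ̄} f̄'^{-2} (2ĀB̄ + 3Ā'²)`, while `4A² = 4 e^{-4γ̄} Ā²`.
-/

open Real

theorem deriv_mul_deriv_of_comp_eq_exp_mul {A Abar gb fb : ℝ → ℝ} {φ : ℝ}
    (hA : ∀ x, A (fb x) = exp (-2 * gb x) * Abar x)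
    (hAd : DifferentiableAt ℝ A (fb φ)) (hfd : DifferentiableAt ℝ fb φ)
    (hgd : DifferentiableAt ℝ gb φ) (hAbd : DifferentiableAt ℝ Abar φ) :
    deriv A (fb φ) * deriv fb φ = exp (-2 * gb φ) * (deriv Abar φ - 2 * deriv gb φ * Abar φ) := by
  have hexp : HasDerivAt (fun x => exp (-2 * gb x)) (exp (-2 * gb φ) * (-2 * deriv gb φ)) φ := by
    simpa using (hgd.hasDerivAt.const_mul (-2)).exp
  have hcomp : HasDerivAt (A ∘ fb) (deriv A (fb φ) * deriv fb φ) φ :=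
    hAd.hasDerivAt.comp φ hfd.hasDerivAt
  rw [show A ∘ fb = fun x => exp (-2 * gb x) * Abar x from funext hA] at hcomp
  rw [hcomp.unique (hexp.mul hAbd.hasDerivAt)]
  ring

theorem integrand_eq_of_weyl_rescaling {e Abar Bbar dAbar dg df dA : ℝ}
    (he : e ≠ 0) (hdf : df ≠ 0) (hAbar : Abar ≠ 0)
    (hdA : dA * df = e * (dAbar - 2 * dg * Abar)) :
    (2 * (e * Abar) * (e * df⁻¹ ^ 2 * (Bbar - 6 * dg ^ 2 * Abar + 6 * dg * dAbar))
        + 3 * dA ^ 2) / (4 * (e * Abar) ^ 2) * df ^ 2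
      = (2 * Abar * Bbar + 3 * dAbar ^ 2) / (4 * Abar ^ 2) := by
  rw [eq_div_of_mul_eq hdf hdA]
  field_simp
  ring

theorem stmt_2_general (A B Abar Bbar gb fb : ℝ → ℝ)
    (hAd : Differentiable ℝ A)
    (hAbd : Differentiable ℝ Abar)
    (hgd : Differentiable ℝ gb) (hfd : Differentiable ℝ fb)
    (hA : ∀ φ, A (fb φ) = Real.exp (-2 * gb φ) * Abar φ)
    (hB : ∀ φ, B (fb φ) = Real.exp (-2 * gb φ) * (deriv fb φ)⁻¹ ^ 2 *
      (Bbar φ - 6 * (deriv gb φ) ^ 2 * Abar φ + 6 * deriv gb φ * deriv Abar φ))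
    (hfp : ∀ φ, deriv fb φ ≠ 0) :
    ∀ φ, Abar φ ≠ 0 →
      (2 * A (fb φ) * B (fb φ) + 3 * (deriv A (fb φ)) ^ 2) / (4 * (A (fb φ)) ^ 2)
        * (deriv fb φ) ^ 2
      = (2 * Abar φ * Bbar φ + 3 * (deriv Abar φ) ^ 2) / (4 * (Abar φ) ^ 2) := by
  intro φ hAbar
  rw [hA φ, hB φ]
  exact integrand_eq_of_weyl_rescaling (exp_ne_zero _) (hfp φ) hAbar
    (deriv_mul_deriv_of_comp_eq_exp_mul hA (hAd _) (hfd φ) (hgd φ) (hAbd φ))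

theorem stmt_2 (A B Abar Bbar gb fb : ℝ → ℝ)
    (hAd : Differentiable ℝ A) (hBd : Differentiable ℝ B)
    (hAbd : Differentiable ℝ Abar) (hBbd : Differentiable ℝ Bbar)
    (hgd : Differentiable ℝ gb) (hfd : Differentiable ℝ fb)
    (hA : ∀ φ, A (fb φ) = Real.exp (-2 * gb φ) * Abar φ)
    (hB : ∀ φ, B (fb φ) = Real.exp (-2 * gb φ) * (deriv fb φ)⁻¹ ^ 2 *
      (Bbar φ - 6 * (deriv gb φ) ^ 2 * Abar φ + 6 * deriv gb φ * deriv Abar φ))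
    (hfp : ∀ φ, deriv fb φ ≠ 0) :
    ∀ φ, Abar φ ≠ 0 →
      (2 * A (fb φ) * B (fb φ) + 3 * (deriv A (fb φ)) ^ 2) / (4 * (A (fb φ)) ^ 2)
        * (deriv fb φ) ^ 2
      = (2 * Abar φ * Bbar φ + 3 * (deriv Abar φ) ^ 2) / (4 * (Abar φ) ^ 2) :=
  stmt_2_general A B Abar Bbar gb fb hAd hAbd hgd hfd hA hB hfp
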